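/- In an SLC group G with unique nonidentity commutator s and canonical involution *, every element of the form g + g* and every element g with g* = g is central in the group ring RG. -/

import Mathlib

/-!
Every commutator is `1` or `s`, so `s` is a central involution and for all `g h` either
`g h = h g` or `g h = s h g`. In the second case multiplication by `h` on either side
exchanges the two terms of `g + s g`, so `g + g*` commutes with every group element `h` when
`g` is not central. A `*`-symmetric `g` must be central, since `s g ≠ g`.
-/

open scoped commutatorElement

/-- A group is SLC with (unique nonidentity) commutator `s` if `s ≠ 1` is its only
nonidentity commutator and it has the limited commutativity property. -/
def IsSLC (G : Type*) [Group G] (s : G) : Prop :=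
  s ≠ 1 ∧ (∃ g h : G, ⁅g, h⁆ = s) ∧ (∀ g h : G, ⁅g, h⁆ = 1 ∨ ⁅g, h⁆ = s) ∧
    (∀ g h : G, g * h = h * g →
      g ∈ Subgroup.center G ∨ h ∈ Subgroup.center G ∨ g * h ∈ Subgroup.center G)

namespace IsSLC

variable {G : Type*} [Group G] {s : G}

theorem mul_self_eq_one (hG : IsSLC G s) : s * s = 1 := by
  obtain ⟨hs, ⟨a, b, hab⟩, hcomm, -⟩ := hG
  have hba : ⁅b, a⁆ = s⁻¹ := by rw [← hab, commutatorElement_inv]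
  rcases hcomm b a with h | h <;> rw [hba] at h
  · exact absurd (inv_eq_one.mp h) hs
  · nth_rw 1 [← h]
    exact inv_mul_cancel s

theorem mem_center (hG : IsSLC G s) : s ∈ Subgroup.center G := by
  refine Subgroup.mem_center_iff.mpr fun x => ?_
  rcases hG.2.2.1 s x with h | h
  · exact (commutatorElement_eq_one_iff_mul_comm.mp h).symm
  · -- `s x s⁻¹ x⁻¹ = s` would force `x s⁻¹ x⁻¹ = 1`, i.e. `s = 1`
    refine absurd ?_ hG.1
    rw [commutatorElement_def, mul_assoc, mul_assoc, mul_eq_left, ← mul_assoc,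
      mul_inv_eq_one, mul_eq_left, inv_eq_one] at h
    exact h

theorem mul_comm_or (hG : IsSLC G s) (g h : G) : g * h = h * g ∨ g * h = s * (h * g) := by
  rcases hG.2.2.1 g h with hc | hc
  · exact .inl (commutatorElement_eq_one_iff_mul_comm.mp hc)
  · exact .inr (by rw [← hc, commutatorElement_def]; group)

end IsSLC

namespace MonoidAlgebra

variable {k G : Type*} [CommSemiring k]

theorem mem_center_of_commute_of [Monoid G] {x : MonoidAlgebra k G}
    (hx : ∀ g, Commute x (of k G g)) : x ∈ Subsemiring.center (MonoidAlgebra k G) := by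
  refine Subsemiring.mem_center_iff.mpr fun y => ?_
  induction y using MonoidAlgebra.induction_on with
  | of g => exact (hx g).eq.symm
  | add y z hy hz => rw [mul_add, add_mul, hy, hz]
  | smul r y hy => rw [smul_mul_assoc, hy, mul_smul_comm]

theorem single_mem_center [Monoid G] {g : G} (hg : g ∈ Submonoid.center G) (r : k) :
    single g r ∈ Subsemiring.center (MonoidAlgebra k G) :=
  mem_center_of_commute_of fun h => by
    simp only [Commute, SemiconjBy, of_apply, single_mul_single, mul_one, one_mul,
      Submonoid.mem_center_iff.mp hg h]

theorem single_add_single_mul_left_mem_center [Group G] {s : G} (hG : IsSLC G s) (g : G)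
    (r : k) :
    single g r + single (s * g) r ∈ Subsemiring.center (MonoidAlgebra k G) := by
  refine mem_center_of_commute_of fun h => ?_
  have hs h : s * h = h * s := (Subgroup.mem_center_iff.mp hG.mem_center h).symm
  simp only [Commute, SemiconjBy, of_apply, add_mul, mul_add, single_mul_single, mul_one,
    one_mul]
  rcases hG.mul_comm_or g h with hgh | hgh
  · have hsg : s * g * h = h * (s * g) := by
      rw [mul_assoc, hgh, ← mul_assoc, ← mul_assoc, hs]
    rw [hgh, hsg]
  · have hsg : s * g * h = h * g := by
      rw [mul_assoc, hgh, ← mul_assoc, hG.mul_self_eq_one, one_mul]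
    have hgs : h * (s * g) = g * h := by rw [hgh, ← mul_assoc, ← hs, mul_assoc]
    rw [hsg, hgs, add_comm]

end MonoidAlgebra

/-- in an SLC group `G` with canonical involution `*`, every
element `g + g*` and every `*`-symmetric group element is central in `RG`. -/
theorem slc_symmetric_elements_central {R : Type*} [CommRing R] {G : Type*} [Group G]
    (s : G) (hG : IsSLC G s)
    (st : G → G)
    (hstc : ∀ g : G, g ∈ Subgroup.center G → st g = g)
    (hstnc : ∀ g : G, g ∉ Subgroup.center G → st g = s * g) :
    (∀ g : G, ∀ β : MonoidAlgebra R G,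
        (MonoidAlgebra.single g (1 : R) + MonoidAlgebra.single (st g) (1 : R)) * β =
          β * (MonoidAlgebra.single g (1 : R) + MonoidAlgebra.single (st g) (1 : R))) ∧
    (∀ g : G, st g = g → ∀ β : MonoidAlgebra R G,
        MonoidAlgebra.single g (1 : R) * β = β * MonoidAlgebra.single g (1 : R)) := by
  have central {x : MonoidAlgebra R G} (hx : x ∈ Subsemiring.center _) (β) : x * β = β * x :=
    (Subsemiring.mem_center_iff.mp hx β).symm
  refine ⟨fun g => central ?_, fun g hg => central ?_⟩
  · by_cases hgc : g ∈ Subgroup.center G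
    · have hg := MonoidAlgebra.single_mem_center (k := R) hgc 1
      rw [hstc g hgc]
      exact add_mem hg hg
    · rw [hstnc g hgc]
      exact MonoidAlgebra.single_add_single_mul_left_mem_center hG g 1
  · have hgc : g ∈ Subgroup.center G := by
      by_contra hgc
      exact hG.1 (mul_eq_right.mp ((hstnc g hgc).symm.trans hg))
    exact MonoidAlgebra.single_mem_center hgc 1
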